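/- Let Y = D ∪ L ⊆ ℝ², where D = {(x,y) ∈ ℝ² : 9|y| ≤ 1/4 − |x|} and L = ([−π/2, −1/4] ∪ [1/4, π/2]) × {0}, equipped with the subspace topology from ℝ². Then Y is not a topological spherical suspension: there is no topological space Z such that Y is homeomorphic to the suspension Susp(Z), defined as the quotient of the product space Z × [0,1] by the relation identifying all points of Z × {0} with each other and all points of Z × {1} with each other. -/
import Mathlib


/- The space `Y = D ∪ L ⊆ ℝ²` with the subspace topology is not a topological spherical
suspension: there is no topological space `Z` with `Y ≃ₜ Susp Z`, where `Susp Z` is the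
quotient of `Z × [0,1]` collapsing `Z × {0}` to a point and `Z × {1}` to a point. -/

open Set Real

noncomputable section

/-- The set `D = {(x,y) : 9|y| ≤ 1/4 - |x|}`. -/
def setD : Set (ℝ × ℝ) := {p | 9 * |p.2| ≤ 1 / 4 - |p.1|}

/-- The set `L = ([-π/2,-1/4] ∪ [1/4,π/2]) × {0}`. -/
def lineLY : Set (ℝ × ℝ) :=
  (Set.Icc (-(π / 2)) (-(1 / 4 : ℝ)) ∪ Set.Icc (1 / 4 : ℝ) (π / 2)) ×ˢ ({0} : Set ℝ)

/-- The space `Y = D ∪ L`. -/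
def spaceY : Set (ℝ × ℝ) := setD ∪ lineLY

/-- The setoid on `Z × [0,1]` identifying all points of `Z × {0}` with each other and all
points of `Z × {1}` with each other. -/
def suspSetoid (Z : Type) : Setoid (Z × unitInterval) where
  r a b := a = b ∨ (a.2 = 0 ∧ b.2 = 0) ∨ (a.2 = 1 ∧ b.2 = 1)
  iseqv := by
    constructor
    · intro a; exact Or.inl rfl
    · rintro a b (rfl | ⟨h1, h2⟩ | ⟨h1, h2⟩)
      · exact Or.inl rfl
      · exact Or.inr (Or.inl ⟨h2, h1⟩)
      · exact Or.inr (Or.inr ⟨h2, h1⟩)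
    · rintro a b c (rfl | ⟨h1, h2⟩ | ⟨h1, h2⟩) (rfl | ⟨g1, g2⟩ | ⟨g1, g2⟩)
      · exact Or.inl rfl
      · exact Or.inr (Or.inl ⟨g1, g2⟩)
      · exact Or.inr (Or.inr ⟨g1, g2⟩)
      · exact Or.inr (Or.inl ⟨h1, h2⟩)
      · exact Or.inr (Or.inl ⟨h1, g2⟩)
      · exact absurd (h2.symm.trans g1) (by simp [← Subtype.coe_inj])
      · exact Or.inr (Or.inr ⟨h1, h2⟩)
      · exact absurd (h2.symm.trans g1) (by simp [← Subtype.coe_inj])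
      · exact Or.inr (Or.inr ⟨h1, g2⟩)

/-- The (unreduced) topological suspension of `Z`: the quotient of `Z × [0,1]` collapsing
`Z × {0}` and `Z × {1}` to two points, with the quotient topology. -/
def Susp (Z : Type) [TopologicalSpace Z] : Type := Quotient (suspSetoid Z)

instance (Z : Type) [TopologicalSpace Z] : TopologicalSpace (Susp Z) :=
  instTopologicalSpaceQuotient

-- ===================== auxiliary development =====================

namespace SuspProof

variable {Z : Type} [TopologicalSpace Z]

/-- quotient map -/
def σ (Z : Type) [TopologicalSpace Z] : Z × unitInterval → Susp Z :=
  Quotient.mk (suspSetoid Z)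

lemma continuous_σ : Continuous (σ Z) := continuous_quot_mk

lemma σ_eq_iff (a b : Z × unitInterval) :
    σ Z a = σ Z b ↔ (a = b ∨ (a.2 = 0 ∧ b.2 = 0) ∨ (a.2 = 1 ∧ b.2 = 1)) :=
  ⟨fun h => Quotient.exact h, fun h => Quotient.sound h⟩

lemma σ_surj (c : Susp Z) : ∃ a, σ Z a = c := Quotient.exists_rep c

def ι : ℝ → unitInterval := projIcc 0 1 zero_le_one

lemma continuous_ι : Continuous ι := continuous_projIcc

lemma ι_coe (s : unitInterval) : ι (s : ℝ) = s := projIcc_val zero_le_one s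

lemma ι_coe_of_mem {r : ℝ} (h0 : 0 ≤ r) (h1 : r ≤ 1) : ((ι r : unitInterval) : ℝ) = r := by
  rw [ι, coe_projIcc]
  rw [min_eq_right h1, max_eq_right h0]

lemma ι_zero : ι (0:ℝ) = 0 := by
  ext; rw [ι_coe_of_mem le_rfl zero_le_one]; norm_num

lemma ι_one : ι (1:ℝ) = 1 := by
  ext; rw [ι_coe_of_mem zero_le_one le_rfl]; norm_num

def φ (z : Z) : ℝ → Susp Z := fun r => σ Z (z, ι r)

lemma continuous_φ (z : Z) : Continuous (φ z) :=
  continuous_σ.comp (continuous_const.prodMk continuous_ι)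

lemma I_ne_01 : (0 : unitInterval) ≠ 1 := by
  intro h
  have := congrArg (Subtype.val) h
  norm_num at this

end SuspProof

open SuspProof

/-- If `Z` has two distinct points, the complement of any point of `Susp Z` is preconnected. -/
lemma susp_compl_preconnected {Z : Type} [TopologicalSpace Z] (z₁ z₂ : Z) (hz : z₁ ≠ z₂)
    (c : Susp Z) : IsPreconnected {y : Susp Z | y ≠ c} := by
  obtain ⟨⟨w, t⟩, rfl⟩ := σ_surj c
  rcases eq_or_lt_of_le t.2.1 with ht0 | ht0
  · -- t = 0
    have htz : t = 0 := by ext; exact ht0.symm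
    subst htz
    have heq : {y : Susp Z | y ≠ σ Z (w, 0)} = ⋃ z : Z, φ z '' Set.Ioc (0:ℝ) 1 := by
      ext y
      simp only [mem_setOf_eq, mem_iUnion, mem_image]
      constructor
      · intro hy
        obtain ⟨⟨z, s⟩, rfl⟩ := σ_surj y
        have hs0 : (0:ℝ) < s := by
          rcases lt_or_eq_of_le s.2.1 with h | h
          · exact h
          · exfalso; apply hy
            rw [σ_eq_iff]
            exact Or.inr (Or.inl ⟨by ext; exact h.symm, rfl⟩)
        exact ⟨z, (s:ℝ), ⟨hs0, s.2.2⟩, by rw [φ, ι_coe]⟩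
      · rintro ⟨z, r, ⟨hr0, hr1⟩, rfl⟩ h
        rw [φ, σ_eq_iff] at h
        have hιr : ((ι r : unitInterval) : ℝ) = r := ι_coe_of_mem hr0.le hr1
        rcases h with h | ⟨h, -⟩ | ⟨-, h⟩
        · have := congrArg (fun p : Z × unitInterval => (p.2 : ℝ)) h
          simp only at this
          rw [hιr] at this; norm_num at this; linarith
        · have := congrArg Subtype.val h
          rw [hιr] at this; norm_num at this; linarith
        · exact I_ne_01 h
    rw [heq]
    rw [← sUnion_range]
    apply isPreconnected_sUnion (σ Z (z₁, 1))
    · rintro s ⟨z, rfl⟩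
      exact ⟨1, by norm_num, by
        rw [φ, σ_eq_iff]
        exact Or.inr (Or.inr ⟨ι_one, rfl⟩)⟩
    · rintro s ⟨z, rfl⟩
      exact isPreconnected_Ioc.image _ (continuous_φ z).continuousOn
  rcases eq_or_lt_of_le t.2.2 with ht1 | ht1
  · -- t = 1
    have htz : t = 1 := by ext; exact ht1
    subst htz
    have heq : {y : Susp Z | y ≠ σ Z (w, 1)} = ⋃ z : Z, φ z '' Set.Ico (0:ℝ) 1 := by
      ext y
      simp only [mem_setOf_eq, mem_iUnion, mem_image]
      constructor
      · intro hy
        obtain ⟨⟨z, s⟩, rfl⟩ := σ_surj y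
        have hs1 : (s:ℝ) < 1 := by
          rcases lt_or_eq_of_le s.2.2 with h | h
          · exact h
          · exfalso; apply hy
            rw [σ_eq_iff]
            exact Or.inr (Or.inr ⟨by ext; exact h, rfl⟩)
        exact ⟨z, (s:ℝ), ⟨s.2.1, hs1⟩, by rw [φ, ι_coe]⟩
      · rintro ⟨z, r, ⟨hr0, hr1⟩, rfl⟩ h
        rw [φ, σ_eq_iff] at h
        have hιr : ((ι r : unitInterval) : ℝ) = r := ι_coe_of_mem hr0 hr1.le
        rcases h with h | ⟨-, h⟩ | ⟨h, -⟩
        · have := congrArg (fun p : Z × unitInterval => (p.2 : ℝ)) h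
          simp only at this
          rw [hιr] at this; norm_num at this; linarith
        · exact I_ne_01 h.symm
        · have := congrArg Subtype.val h
          rw [hιr] at this; norm_num at this; linarith
    rw [heq, ← sUnion_range]
    apply isPreconnected_sUnion (σ Z (z₁, 0))
    · rintro s ⟨z, rfl⟩
      exact ⟨0, by norm_num, by
        rw [φ, σ_eq_iff]
        exact Or.inr (Or.inl ⟨ι_zero, rfl⟩)⟩
    · rintro s ⟨z, rfl⟩
      exact isPreconnected_Ico.image _ (continuous_φ z).continuousOn
  · -- 0 < t < 1
    obtain ⟨w', hw'w⟩ : ∃ w', w' ≠ w := by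
      rcases eq_or_ne z₁ w with rfl | h
      exacts [⟨z₂, hz.symm⟩, ⟨z₁, h⟩]
    set U : Set (Susp Z) := ⋃ z : {z : Z // z ≠ w}, φ (z : Z) '' Set.Icc (0:ℝ) 1 with hU
    set A : Set (Susp Z) := φ w '' Set.Iio (t:ℝ) with hA
    set B : Set (Susp Z) := φ w '' Set.Ioi (t:ℝ) with hB
    have pole0A : σ Z (w, 0) ∈ A := ⟨0, ht0, by rw [φ, ι_zero]⟩
    have pole0M : ∀ z : {z : Z // z ≠ w}, σ Z (w, 0) ∈ φ (z : Z) '' Set.Icc (0:ℝ) 1 := by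
      intro z
      refine ⟨0, by norm_num, ?_⟩
      rw [φ, σ_eq_iff]
      exact Or.inr (Or.inl ⟨ι_zero, rfl⟩)
    have hUA : IsPreconnected (U ∪ A) := by
      have : U ∪ A = ⋃₀ (insert A (Set.range (fun z : {z : Z // z ≠ w} => φ (z : Z) '' Set.Icc (0:ℝ) 1))) := by
        rw [sUnion_insert, sUnion_range, hU]
        exact (union_comm _ _)
      rw [this]
      apply isPreconnected_sUnion (σ Z (w, 0))
      · rintro s (rfl | ⟨z, rfl⟩)
        · exact pole0A
        · exact pole0M z
      · rintro s (rfl | ⟨z, rfl⟩)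
        · exact isPreconnected_Iio.image _ (continuous_φ w).continuousOn
        · exact isPreconnected_Icc.image _ (continuous_φ _).continuousOn
    have pole1U : σ Z (w, 1) ∈ U := by
      rw [hU]
      refine mem_iUnion.2 ⟨⟨w', hw'w⟩, 1, by norm_num, ?_⟩
      rw [φ, σ_eq_iff]
      exact Or.inr (Or.inr ⟨ι_one, rfl⟩)
    have pole1B : σ Z (w, 1) ∈ B := ⟨1, ht1, by rw [φ, ι_one]⟩
    have hall : IsPreconnected ((U ∪ A) ∪ B) :=
      IsPreconnected.union (σ Z (w, 1)) (Or.inl pole1U) pole1B hUA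
        (isPreconnected_Ioi.image _ (continuous_φ w).continuousOn)
    have heq : {y : Susp Z | y ≠ σ Z (w, t)} = (U ∪ A) ∪ B := by
      ext y
      simp only [mem_setOf_eq]
      constructor
      · intro hy
        obtain ⟨⟨z, s⟩, rfl⟩ := σ_surj y
        by_cases hzw : z = w
        · subst hzw
          have hst : (s : ℝ) ≠ t := by
            intro h
            exact hy (by rw [σ_eq_iff]; exact Or.inl (by rw [Subtype.ext h]))
          rcases lt_or_gt_of_ne hst with h | h
          · refine Or.inl (Or.inr ⟨(s:ℝ), h, ?_⟩)
            rw [φ, ι_coe]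
          · refine Or.inr ⟨(s:ℝ), h, ?_⟩
            rw [φ, ι_coe]
        · refine Or.inl (Or.inl ?_)
          rw [hU]
          refine mem_iUnion.2 ⟨⟨z, hzw⟩, (s:ℝ), ⟨s.2.1, s.2.2⟩, ?_⟩
          rw [φ, ι_coe]
      · rintro ((hy | hy) | hy)
        · rw [hU] at hy
          obtain ⟨z, r, ⟨hr0, hr1⟩, rfl⟩ := mem_iUnion.1 hy
          intro h
          rw [φ, σ_eq_iff] at h
          rcases h with h | ⟨-, h⟩ | ⟨-, h⟩
          · exact z.2 (congrArg Prod.fst h)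
          · have : (t:ℝ) = 0 := congrArg Subtype.val h; linarith
          · have : (t:ℝ) = 1 := congrArg Subtype.val h; linarith
        · obtain ⟨r, hr, rfl⟩ := hy
          have hιr : ((ι r : unitInterval) : ℝ) < t := by
            rw [ι, coe_projIcc]
            refine max_lt ht0 (lt_of_le_of_lt (min_le_right _ _) hr)
          intro h
          rw [φ, σ_eq_iff] at h
          rcases h with h | ⟨-, h⟩ | ⟨-, h⟩
          · have := congrArg (fun p : Z × unitInterval => (p.2 : ℝ)) h
            simp only at this; linarith
          · have : (t:ℝ) = 0 := congrArg Subtype.val h; linarith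
          · have : (t:ℝ) = 1 := congrArg Subtype.val h; linarith
        · obtain ⟨r, hr, rfl⟩ := hy
          have hιr : t < ((ι r : unitInterval) : ℝ) := by
            rw [ι, coe_projIcc]
            exact lt_max_of_lt_right (lt_min ht1 hr)
          intro h
          rw [φ, σ_eq_iff] at h
          rcases h with h | ⟨-, h⟩ | ⟨-, h⟩
          · have := congrArg (fun p : Z × unitInterval => (p.2 : ℝ)) h
            simp only at this; linarith
          · have : (t:ℝ) = 0 := congrArg Subtype.val h; linarith
          · have : (t:ℝ) = 1 := congrArg Subtype.val h; linarith
    rw [heq]; exact hall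

-- appended after the big lemma, before `end`

/-- The height function on the suspension. -/
def heightF (Z : Type) [TopologicalSpace Z] : Susp Z → ℝ :=
  Quotient.lift (fun a : Z × unitInterval => (a.2 : ℝ)) (by
    rintro a b (rfl | ⟨h1, h2⟩ | ⟨h1, h2⟩)
    · rfl
    · show ((a.2 : ℝ)) = ((b.2 : ℝ)); rw [h1, h2]
    · show ((a.2 : ℝ)) = ((b.2 : ℝ)); rw [h1, h2])

lemma continuous_heightF (Z : Type) [TopologicalSpace Z] : Continuous (heightF Z) :=
  Continuous.quotient_lift (continuous_subtype_val.comp continuous_snd) _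

lemma injective_heightF (Z : Type) [TopologicalSpace Z] [Subsingleton Z] :
    Function.Injective (heightF Z) := by
  intro y1 y2 h
  obtain ⟨⟨z1, s1⟩, rfl⟩ := σ_surj y1
  obtain ⟨⟨z2, s2⟩, rfl⟩ := σ_surj y2
  have hs : s1 = s2 := Subtype.ext h
  have hzz : z1 = z2 := Subsingleton.elim _ _
  rw [hs, hzz]

/-- the cut point of `Y` -/
def qpt : ↥spaceY :=
  ⟨(1/2, 0), Or.inr ⟨Or.inr ⟨by norm_num, by nlinarith [pi_gt_three]⟩, rfl⟩⟩

lemma Y_cut : ¬ IsPreconnected {x : ↥spaceY | x ≠ qpt} := by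
  intro h
  have hu : IsOpen {x : ↥spaceY | (x : ℝ × ℝ).1 < 1/2} :=
    (isOpen_lt continuous_fst continuous_const).preimage continuous_subtype_val
  have hv : IsOpen {x : ↥spaceY | (1:ℝ)/2 < (x : ℝ × ℝ).1} :=
    (isOpen_lt continuous_const continuous_fst).preimage continuous_subtype_val
  have hx0 : ((0:ℝ), (0:ℝ)) ∈ spaceY := Or.inl (by simp [setD])
  have hx1 : ((π/2 : ℝ), (0:ℝ)) ∈ spaceY :=
    Or.inr ⟨Or.inr ⟨by nlinarith [pi_gt_three], le_rfl⟩, rfl⟩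
  have hcov : {x : ↥spaceY | x ≠ qpt} ⊆
      {x : ↥spaceY | (x : ℝ × ℝ).1 < 1/2} ∪ {x : ↥spaceY | (1:ℝ)/2 < (x : ℝ × ℝ).1} := by
    intro x hx
    rcases lt_trichotomy ((x : ℝ × ℝ).1) (1/2) with h' | h' | h'
    · exact Or.inl h'
    · exfalso
      apply hx
      rcases x.2 with hD | hL
      · exfalso
        have hD' := hD
        simp only [setD, mem_setOf_eq, h'] at hD'
        rw [show |(1:ℝ)/2| = 1/2 from abs_of_nonneg (by norm_num)] at hD'
        linarith [abs_nonneg ((x : ℝ × ℝ).2)]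
      · have h2 : (x : ℝ × ℝ).2 = 0 := hL.2
        apply Subtype.ext
        exact Prod.ext h' h2
    · exact Or.inr h'
  obtain ⟨x, -, hxu, hxv⟩ := h _ _ hu hv hcov
    ⟨⟨(0,0), hx0⟩, by
      constructor
      · intro hc
        have := congrArg (fun x : ↥spaceY => (x : ℝ × ℝ).1) hc
        norm_num [qpt] at this
      · show (0:ℝ) < 1/2; norm_num⟩
    ⟨⟨(π/2, 0), hx1⟩, by
      constructor
      · intro hc
        have := congrArg (fun x : ↥spaceY => (x : ℝ × ℝ).1) hc
        simp only [qpt] at this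
        nlinarith [pi_gt_three]
      · show (1:ℝ)/2 < π/2; nlinarith [pi_gt_three]⟩
  simp only [mem_setOf_eq] at hxu hxv
  linarith

/-- clamp to [0,1] -/
def cl (r : ℝ) : ℝ := max 0 (min 1 r)

lemma cl_mem (r : ℝ) : 0 ≤ cl r ∧ cl r ≤ 1 :=
  ⟨le_max_left _ _, max_le (by norm_num) (min_le_left _ _)⟩

lemma continuous_cl : Continuous cl :=
  continuous_const.max (continuous_const.min continuous_id)

lemma cl_zero : cl 0 = 0 := by norm_num [cl]
lemma cl_one : cl 1 = 1 := by norm_num [cl]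

/-- the straight arc -/
def γ1 (r : ℝ) : ↥spaceY :=
  ⟨(cl r / 2 - 1/4, 0), by
    obtain ⟨h0, h1⟩ := cl_mem r
    refine Or.inl ?_
    simp only [setD, mem_setOf_eq, abs_zero, mul_zero]
    have : |cl r / 2 - 1/4| ≤ 1/4 := abs_le.mpr ⟨by linarith, by linarith⟩
    linarith⟩

/-- the bent arc -/
def γ2 (r : ℝ) : ↥spaceY :=
  ⟨(cl r / 2 - 1/4, cl r * (1 - cl r) / 18), by
    obtain ⟨h0, h1⟩ := cl_mem r
    refine Or.inl ?_
    simp only [setD, mem_setOf_eq]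
    rw [abs_of_nonneg (by nlinarith : (0:ℝ) ≤ cl r * (1 - cl r) / 18)]
    have habs : |cl r / 2 - 1/4| ≤ 1/4 - cl r * (1 - cl r) / 2 :=
      abs_le.mpr ⟨by nlinarith, by nlinarith⟩
    linarith⟩

lemma continuous_γ1 : Continuous γ1 :=
  Continuous.subtype_mk (((continuous_cl.div_const 2).sub continuous_const).prodMk
    continuous_const) _

lemma continuous_γ2 : Continuous γ2 :=
  Continuous.subtype_mk (((continuous_cl.div_const 2).sub continuous_const).prodMk
    (((continuous_cl.mul (continuous_const.sub continuous_cl)).div_const 18))) _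

lemma γ2_ends (r : ℝ) (h : cl r = 0 ∨ cl r = 1) : γ2 r = γ1 0 ∨ γ2 r = γ1 1 := by
  rcases h with h | h
  · left; apply Subtype.ext; simp [γ2, γ1, h, cl_zero]
  · right; apply Subtype.ext; simp [γ2, γ1, h, cl_one]

/-- No continuous injection of `Y` into `ℝ`. -/
lemma no_embed (g : ↥spaceY → ℝ) (hg : Continuous g) (hinj : Function.Injective g) : False := by
  have hab : γ1 0 ≠ γ1 1 := by
    intro h
    have := congrArg (fun x : ↥spaceY => (x : ℝ × ℝ).1) h
    simp [γ1, cl_zero, cl_one] at this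
    norm_num at this
  have hgab : g (γ1 0) ≠ g (γ1 1) := fun h => hab (hinj h)
  set m : ℝ := (g (γ1 0) + g (γ1 1)) / 2 with hm
  have hmem : m ∈ Set.uIcc (g (γ1 0)) (g (γ1 1)) := by
    rcases le_total (g (γ1 0)) (g (γ1 1)) with h | h
    · rw [Set.uIcc_of_le h]; constructor <;> [linarith; linarith]
    · rw [Set.uIcc_of_ge h]; constructor <;> [linarith; linarith]
  have hm0 : m ≠ g (γ1 0) := by intro h; apply hgab; rw [hm] at h; linarith
  have hm1 : m ≠ g (γ1 1) := by intro h; apply hgab; rw [hm] at h; linarith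
  obtain ⟨r1, -, hr1⟩ := intermediate_value_uIcc
    ((hg.comp continuous_γ1).continuousOn (s := Set.uIcc (0:ℝ) 1)) hmem
  have hmem2 : m ∈ Set.uIcc (g (γ2 0)) (g (γ2 1)) := by
    have e0 : γ2 0 = γ1 0 := by apply Subtype.ext; simp [γ2, γ1, cl_zero]
    have e1 : γ2 1 = γ1 1 := by apply Subtype.ext; simp [γ2, γ1, cl_one]
    rw [e0, e1]; exact hmem
  obtain ⟨r2, -, hr2⟩ := intermediate_value_uIcc
    ((hg.comp continuous_γ2).continuousOn (s := Set.uIcc (0:ℝ) 1)) hmem2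
  have hr1' : g (γ1 r1) = m := hr1
  have hr2' : g (γ2 r2) = m := hr2
  have heq : γ1 r1 = γ2 r2 := hinj (hr1'.trans hr2'.symm)
  have h2 : cl r2 * (1 - cl r2) / 18 = 0 := by
    have := congrArg (fun x : ↥spaceY => (x : ℝ × ℝ).2) heq
    simpa [γ1, γ2] using this.symm
  have hcl : cl r2 = 0 ∨ cl r2 = 1 := by
    rcases mul_eq_zero.1 (by linarith : cl r2 * (1 - cl r2) = 0) with h | h
    · exact Or.inl h
    · exact Or.inr (by linarith)
  rcases γ2_ends r2 hcl with h | h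
  · rw [h] at hr2'; exact hm0 hr2'.symm
  · rw [h] at hr2'; exact hm1 hr2'.symm


/-- `Y` is not homeomorphic to the suspension of any topological space. -/
theorem spaceY_not_a_suspension :
    ¬ ∃ (Z : Type) (_ : TopologicalSpace Z), Nonempty (↥spaceY ≃ₜ Susp Z) := by
  rintro ⟨Z, _, ⟨e⟩⟩
  rcases subsingleton_or_nontrivial Z with hsub | hnt
  · rcases isEmpty_or_nonempty Z with hE | hN
    · obtain ⟨⟨z, t⟩, -⟩ := σ_surj (e qpt)
      exact hE.false z
    · exact no_embed (fun x => heightF Z (e x))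
        ((continuous_heightF Z).comp e.continuous)
        ((injective_heightF Z).comp e.injective)
  · obtain ⟨z₁, z₂, hz⟩ := hnt
    apply Y_cut
    have hp := susp_compl_preconnected z₁ z₂ hz (e qpt)
    have himg : e.symm '' {y : Susp Z | y ≠ e qpt} = {x : ↥spaceY | x ≠ qpt} := by
      ext x
      simp only [mem_image, mem_setOf_eq]
      constructor
      · rintro ⟨y, hy, rfl⟩ hc
        exact hy (by rw [← hc, e.apply_symm_apply])
      · intro hxq
        exact ⟨e x, fun hc => hxq (e.injective hc), e.symm_apply_apply x⟩
    have := hp.image _ e.symm.continuous.continuousOn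
    rwa [himg] at this

end
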